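/- arXiv:1509.03571 — 6 statements merged into one kernel-verified Lean document; each statement's English description precedes it below -/
import Mathlib

section
/- For every simple graph G = (V,E), the relation ∼ on V, defined by x ∼ y if and only if N(x) = N(y) or N̄(x) = N̄(y), is an equivalence relation (it is reflexive, symmetric, and transitive). -/
/-!
Two vertices with equal open neighbourhoods are non-adjacent, while two distinct vertices with
equal closed neighbourhoods are adjacent. So in a chain `x ∼ y ∼ z` of mixed type, with
`N(x) = N(y)`, `N̄(y) = N̄(z)` and `y ≠ z`, the vertex `z` is a neighbour of `y`, hence of `x`,
so `x ∈ N̄(z) = N̄(y)` forces `x = y`; transitivity then reduces to the unmixed cases.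
-/

/-- x ∼ y iff the open neighborhoods coincide or the closed neighborhoods coincide. -/
def simRel {V : Type*} (G : SimpleGraph V) (x y : V) : Prop :=
  G.neighborSet x = G.neighborSet y ∨
    insert x (G.neighborSet x) = insert y (G.neighborSet y)

namespace SimpleGraph

variable {V : Type*} (G : SimpleGraph V) {x y z : V}

theorem not_adj_of_neighborSet_eq (h : G.neighborSet x = G.neighborSet y) : ¬G.Adj x y := by
  intro hxy
  have hyy : y ∈ G.neighborSet y := h ▸ hxy
  exact G.irrefl hyy

theorem adj_of_insert_neighborSet_eq (hne : x ≠ y)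
    (h : insert x (G.neighborSet x) = insert y (G.neighborSet y)) : G.Adj x y := by
  have hy : y ∈ insert x (G.neighborSet x) := h ▸ Set.mem_insert y _
  rcases hy with rfl | hy
  · exact absurd rfl hne
  · exact hy

theorem eq_of_neighborSet_eq_of_insert_neighborSet_eq (hne : y ≠ z)
    (hxy : G.neighborSet x = G.neighborSet y)
    (hyz : insert y (G.neighborSet y) = insert z (G.neighborSet z)) : x = y := by
  have hzx : z ∈ G.neighborSet x := hxy ▸ G.adj_of_insert_neighborSet_eq hne hyz
  have hx : x ∈ insert y (G.neighborSet y) := hyz ▸ Set.mem_insert_of_mem z (G.adj_symm hzx)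
  rcases hx with rfl | hx
  · rfl
  · exact absurd hx.symm (G.not_adj_of_neighborSet_eq hxy)

end SimpleGraph

section

variable {V : Type*} {G : SimpleGraph V} {x y z : V}

theorem simRel_symm (h : simRel G x y) : simRel G y x :=
  h.imp Eq.symm Eq.symm

theorem simRel_of_neighborSet_eq_of_insert_neighborSet_eq
    (hxy : G.neighborSet x = G.neighborSet y)
    (hyz : insert y (G.neighborSet y) = insert z (G.neighborSet z)) : simRel G x z := by
  by_cases hne : y = z
  · subst hne
    exact Or.inl hxy
  · obtain rfl := G.eq_of_neighborSet_eq_of_insert_neighborSet_eq hne hxy hyz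
    exact Or.inr hyz

theorem simRel_trans (hxy : simRel G x y) (hyz : simRel G y z) : simRel G x z := by
  rcases hxy with hxy | hxy <;> rcases hyz with hyz | hyz
  · exact Or.inl (hxy.trans hyz)
  · exact simRel_of_neighborSet_eq_of_insert_neighborSet_eq hxy hyz
  · exact simRel_symm (simRel_of_neighborSet_eq_of_insert_neighborSet_eq hyz.symm hxy.symm)
  · exact Or.inr (hxy.trans hyz)

end

/-- The relation ∼ is an equivalence relation on the vertex set of any simple graph. -/
theorem simRel_equivalence {V : Type*} (G : SimpleGraph V) :
    Equivalence (simRel G) :=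
  ⟨fun _ => Or.inl rfl, simRel_symm, simRel_trans⟩
end

section
/- Let G = (V,E) be a simple graph and let P be an equivalence class of the relation ∼. Then P is either edgeless or complete: if some two vertices of P are adjacent in G, then every pair of distinct vertices of P is adjacent in G. -/
/-- Each equivalence class of ∼ is either edgeless or complete: if some two vertices of the
class `{z | simRel G a z}` are adjacent, then every pair of distinct vertices of that class
is adjacent. -/
theorem simRel_class_edgeless_or_complete {V : Type*} (G : SimpleGraph V) (a : V)
    (h : ∃ u ∈ {z | simRel G a z}, ∃ v ∈ {z | simRel G a z}, G.Adj u v) :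
    ∀ u ∈ {z | simRel G a z}, ∀ v ∈ {z | simRel G a z}, u ≠ v → G.Adj u v := by
  obtain ⟨u0, hu0, v0, hv0, huv0⟩ := h
  -- if a is adjacent to a class member, that member has the same closed neighborhood
  have key : ∀ x, simRel G a x → G.Adj a x →
      insert x (G.neighborSet x) = insert a (G.neighborSet a) := by
    intro x hx hax
    rcases hx with h1 | h1
    · exfalso
      have : a ∈ G.neighborSet x := G.mem_neighborSet x a |>.2 hax.symm
      rw [← h1] at this
      exact G.irrefl (G.mem_neighborSet a a |>.1 this)
    · exact h1.symm
  -- there is b in the class with G.Adj a b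
  have hb : ∃ b, simRel G a b ∧ G.Adj a b := by
    rcases hv0 with h1 | h1
    · have : u0 ∈ G.neighborSet v0 := G.mem_neighborSet v0 u0 |>.2 huv0.symm
      rw [← h1] at this
      exact ⟨u0, hu0, this⟩
    · by_cases hva : v0 = a
      · subst hva
        exact ⟨u0, hu0, huv0.symm⟩
      · have ha : a ∈ insert v0 (G.neighborSet v0) := by
          rw [← h1]; exact Set.mem_insert a _
        rcases ha with rfl | ha
        · exact absurd rfl hva
        · exact ⟨v0, Or.inr h1, (G.mem_neighborSet v0 a |>.1 ha).symm⟩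
  obtain ⟨b, hbsim, hab⟩ := hb
  have hbclosed := key b hbsim hab
  -- every class element has the same closed neighborhood as a
  have claim : ∀ x, simRel G a x →
      insert x (G.neighborSet x) = insert a (G.neighborSet a) := by
    intro x hx
    rcases hx with h1 | h1
    · by_cases hxa : x = a
      · subst hxa; rfl
      · exfalso
        have hxb : G.Adj x b := by
          have : b ∈ G.neighborSet a := G.mem_neighborSet a b |>.2 hab
          rw [h1] at this
          exact G.mem_neighborSet x b |>.1 this
        have hxmem : x ∈ insert b (G.neighborSet b) :=
          Set.mem_insert_iff.2 (Or.inr (G.mem_neighborSet b x |>.2 hxb.symm))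
        rw [hbclosed] at hxmem
        rcases hxmem with rfl | hxmem
        · exact hxa rfl
        · have hax : G.Adj a x := G.mem_neighborSet a x |>.1 hxmem
          have : a ∈ G.neighborSet x := G.mem_neighborSet x a |>.2 hax.symm
          rw [← h1] at this
          exact G.irrefl (G.mem_neighborSet a a |>.1 this)
    · exact h1.symm
  intro u hu v hv hne
  have h1 := claim u hu
  have h2 := claim v hv
  have : u ∈ insert v (G.neighborSet v) := by
    rw [h2, ← h1]; exact Set.mem_insert u _
  rcases this with rfl | hm
  · exact absurd rfl hne
  · exact (G.mem_neighborSet v u |>.1 hm).symm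
end

section
/- For every natural number w, let ν(w) denote the number of isomorphism classes of Anosov graphs G whose number of vertices n plus number of edges m satisfies n + m = w. Then ν(w) > w/3 − √(2w) − 9/2 (as real numbers). -/
/-- A connected simple graph is Anosov if every ∼-class has at least two vertices and every
∼-class with exactly two vertices is edgeless. -/
def IsAnosov {V : Type*} (G : SimpleGraph V) : Prop :=
  G.Connected ∧
    (∀ x : V, 2 ≤ {y | simRel G x y}.ncard) ∧
    (∀ x y : V, {z | simRel G x z}.ncard = 2 → simRel G x y → ¬ G.Adj x y)

/-- Anosov graphs whose number of vertices plus number of edges equals `w`, up to graph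
isomorphism. -/
def nuSetoid (w : ℕ) :
    Setoid {p : Σ n : ℕ, SimpleGraph (Fin n) // IsAnosov p.2 ∧ p.1 + p.2.edgeSet.ncard = w} where
  r A B := Nonempty (A.1.2 ≃g B.1.2)
  iseqv := ⟨fun _ => ⟨RelIso.refl _⟩, fun ⟨e⟩ => ⟨e.symm⟩, fun ⟨e⟩ ⟨f⟩ => ⟨e.trans f⟩⟩

/-- `ν w`: the number of isomorphism classes of Anosov graphs with `n` vertices and `m` edges
where `n + m = w`. -/
noncomputable def nuCount (w : ℕ) : ℕ := Nat.card (Quotient (nuSetoid w))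

/-!
Distinct numbers of vertices give non-isomorphic graphs, so it suffices to find, for every `n`
with `√(2w) + 5 ≤ n ≤ (w + 2) / 3`, an Anosov graph with `n` vertices and `m = w - n` edges;
there are more than `w / 3 - √(2w) - 9 / 2` such `n`.

The graphs are blow-ups: every vertex `i` of a connected quotient graph is replaced by `s i ≥ 2`
twins forming an independent set, or a clique when `s i ≥ 3`. Twins are `∼`-equivalent, so every
class has at least two elements, and a class with exactly two is a whole independent fibre.
The quotient consists of a connected graph `H` on `k` vertices blown up into independent pairs,
and three hubs blown up into `3`, `s₂ ∈ {2, 3}` and `2` vertices. Deleting non-bridges from the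
complete graph gives `H` with any number of edges between `k - 1` and `k.choose 2`; together with
the freedom in how the hubs are attached this realises every `m` with
`2n - 2 ≤ m ≤ (n² - 10n + 15) / 2`.
-/

open Finset SimpleGraph

namespace SimpleGraph

variable {V : Type*} {G : SimpleGraph V}

lemma Connected.exists_connected_le_ncard_edgeSet_eq [Finite V] (hG : G.Connected) {e : ℕ}
    (hlo : Nat.card V ≤ e + 1) (hhi : e ≤ G.edgeSet.ncard) :
    ∃ H ≤ G, H.Connected ∧ H.edgeSet.ncard = e := by
  obtain ⟨d, hd⟩ := Nat.exists_eq_add_of_le hhi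
  induction d generalizing G with
  | zero => exact ⟨G, le_rfl, hG, hd⟩
  | succ d ih =>
    have hcyc : ¬ G.IsAcyclic := fun hac => by
      have := (isTree_iff_connected_and_card.mp ⟨hG, hac⟩).2
      rw [Nat.card_coe_set_eq] at this
      omega
    obtain ⟨x, y, hxy, hbr⟩ : ∃ x y, G.Adj x y ∧ ¬ G.IsBridge s(x, y) := by
      simpa [isAcyclic_iff_forall_adj_isBridge] using hcyc
    have hcard : (G.deleteEdges {s(x, y)}).edgeSet.ncard = e + d := by
      rw [edgeSet_deleteEdges, Set.ncard_sdiff_singleton_of_mem (G.mem_edgeSet.mpr hxy)]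
      omega
    obtain ⟨H, hle, hH⟩ := ih (hG.connected_delete_edge_of_not_isBridge hbr) (by omega) hcard
    exact ⟨H, hle.trans (deleteEdges_le _), hH⟩

lemma exists_connected_ncard_edgeSet {k e : ℕ} (hk : 0 < k) (hlo : k ≤ e + 1)
    (hhi : e ≤ k.choose 2) : ∃ H : SimpleGraph (Fin k), H.Connected ∧ H.edgeSet.ncard = e := by
  have : Nonempty (Fin k) := ⟨⟨0, hk⟩⟩
  have htop : (⊤ : SimpleGraph (Fin k)).edgeSet.ncard = k.choose 2 := by
    rw [← coe_edgeFinset, Set.ncard_coe_finset, card_edgeFinset_top_eq_card_choose_two,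
      Fintype.card_fin]
  obtain ⟨H, -, hH⟩ := connected_top.exists_connected_le_ncard_edgeSet_eq
    (by rwa [Nat.card_fin]) (htop ▸ hhi)
  exact ⟨H, hH⟩

lemma Iso.ncard_edgeSet_eq {W : Type*} {H : SimpleGraph W} (e : G ≃g H) :
    G.edgeSet.ncard = H.edgeSet.ncard := by
  rw [← Nat.card_coe_set_eq, ← Nat.card_coe_set_eq, Nat.card_congr e.mapEdgeSet]

end SimpleGraph

section Iso

variable {V W : Type*} {G : SimpleGraph V} {H : SimpleGraph W}

lemma simRel_iso_iff (e : G ≃g H) {x y : V} : simRel H (e x) (e y) ↔ simRel G x y := by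
  simp only [simRel, ← e.image_neighborSet, ← Set.image_insert_eq,
    Set.image_eq_image e.injective]

lemma setOf_simRel_iso (e : G ≃g H) (x : V) :
    {y | simRel H (e x) y} = e '' {y | simRel G x y} := by
  ext y
  obtain ⟨y, rfl⟩ := e.surjective y
  simp [simRel_iso_iff, e.injective.eq_iff]

lemma IsAnosov.of_iso (e : G ≃g H) (hG : IsAnosov G) : IsAnosov H := by
  obtain ⟨hconn, hcard, hadj⟩ := hG
  refine ⟨e.connected_iff.mp hconn, fun x => ?_, fun x y => ?_⟩
  · obtain ⟨x, rfl⟩ := e.surjective x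
    rw [setOf_simRel_iso, Set.ncard_image_of_injective _ e.injective]
    exact hcard x
  · obtain ⟨x, rfl⟩ := e.surjective x
    obtain ⟨y, rfl⟩ := e.surjective y
    rw [setOf_simRel_iso, Set.ncard_image_of_injective _ e.injective, simRel_iso_iff,
      e.map_adj_iff]
    exact hadj x y

end Iso

section BlowUp

variable {I : Type*}

def blowUp (Q : SimpleGraph I) (s : I → ℕ) (K : I → Prop) : SimpleGraph (Σ i, Fin (s i)) where
  Adj x y := Q.Adj x.1 y.1 ∨ x.1 = y.1 ∧ K x.1 ∧ x ≠ y
  symm := ⟨fun _ _ => Or.imp Adj.symm fun ⟨h, hK, hne⟩ => ⟨h.symm, h ▸ hK, hne.symm⟩⟩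
  loopless := ⟨fun _ h => h.elim (Q.loopless.irrefl _) fun h => h.2.2 rfl⟩

variable {Q : SimpleGraph I} {s : I → ℕ} {K : I → Prop}

lemma blowUp_adj {x y : Σ i, Fin (s i)} :
    (blowUp Q s K).Adj x y ↔ Q.Adj x.1 y.1 ∨ x.1 = y.1 ∧ K x.1 ∧ x ≠ y := Iff.rfl

lemma neighborSet_blowUp_of_not {x : Σ i, Fin (s i)} (hK : ¬ K x.1) :
    (blowUp Q s K).neighborSet x = {y | Q.Adj x.1 y.1} := by
  ext y
  simp [blowUp_adj, hK]

lemma insert_neighborSet_blowUp {x : Σ i, Fin (s i)} (hK : K x.1) :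
    insert x ((blowUp Q s K).neighborSet x) = {y | Q.Adj x.1 y.1 ∨ x.1 = y.1} := by
  ext y
  by_cases hxy : x = y
  · subst hxy
    simp
  · simp [blowUp_adj, hK, hxy, Ne.symm hxy]

lemma simRel_blowUp_of_fst_eq {x y : Σ i, Fin (s i)} (h : x.1 = y.1) :
    simRel (blowUp Q s K) x y := by
  by_cases hK : K x.1
  · exact Or.inr (by rw [insert_neighborSet_blowUp hK, insert_neighborSet_blowUp (h ▸ hK), h])
  · exact Or.inl (by rw [neighborSet_blowUp_of_not hK, neighborSet_blowUp_of_not (h ▸ hK), h])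

lemma range_sigmaMk_subset_setOf_simRel_blowUp (x : Σ i, Fin (s i)) :
    Set.range (Sigma.mk x.1) ⊆ {y | simRel (blowUp Q s K) x y} := by
  rintro _ ⟨b, rfl⟩
  exact simRel_blowUp_of_fst_eq rfl

lemma ncard_range_sigmaMk (i : I) :
    (Set.range (Sigma.mk (β := fun i => Fin (s i)) i)).ncard = s i := by
  rw [Set.ncard_range_of_injective sigma_mk_injective, Nat.card_eq_fintype_card, Fintype.card_fin]

lemma blowUp_connected [Nontrivial I] (hQ : Q.Connected) (hs : ∀ i, 0 < s i) :
    (blowUp Q s K).Connected := by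
  have : Nonempty (Σ i, Fin (s i)) :=
    let i := Classical.arbitrary I; ⟨⟨i, ⟨0, hs i⟩⟩⟩
  have key : ∀ i j, Q.Reachable i j → ∀ (a : Fin (s i)) (b : Fin (s j)),
      (blowUp Q s K).Reachable ⟨i, a⟩ ⟨j, b⟩ := by
    rintro i j ⟨p⟩
    induction p with
    | @nil i =>
      intro a b
      obtain ⟨j, hij⟩ := hQ.preconnected.exists_adj_of_nontrivial i
      have h₁ : (blowUp Q s K).Adj ⟨i, a⟩ ⟨j, ⟨0, hs j⟩⟩ := Or.inl hij
      have h₂ : (blowUp Q s K).Adj ⟨j, ⟨0, hs j⟩⟩ ⟨i, b⟩ := Or.inl hij.symm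
      exact h₁.reachable.trans h₂.reachable
    | cons huv _ ih =>
      intro a b
      have h : (blowUp Q s K).Adj ⟨_, a⟩ ⟨_, ⟨0, hs _⟩⟩ := Or.inl huv
      exact h.reachable.trans (ih _ b)
  exact ⟨fun x y => key _ _ (hQ x.1 y.1) _ _⟩

theorem isAnosov_blowUp [Finite I] [Nontrivial I] (hQ : Q.Connected) (hs : ∀ i, 2 ≤ s i)
    (hK : ∀ i, K i → 3 ≤ s i) : IsAnosov (blowUp Q s K) := by
  refine ⟨blowUp_connected hQ fun i => by have := hs i; omega, fun x => ?_,
    fun x y hx hxy hadj => ?_⟩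
  · calc 2 ≤ s x.1 := hs x.1
      _ = _ := (ncard_range_sigmaMk x.1).symm
      _ ≤ _ := Set.ncard_le_ncard (range_sigmaMk_subset_setOf_simRel_blowUp x)
  · have hfib := Set.eq_of_subset_of_ncard_le (range_sigmaMk_subset_setOf_simRel_blowUp (K := K) x)
      (by rw [hx, ncard_range_sigmaMk]; exact hs _)
    have hsx : s x.1 = 2 := by rw [← ncard_range_sigmaMk (s := s) x.1, hfib, hx]
    obtain ⟨b, rfl⟩ : y ∈ Set.range (Sigma.mk x.1) := hfib ▸ hxy
    rcases hadj with h | ⟨-, h, -⟩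
    · exact Q.loopless.irrefl _ h
    · have := hK _ h
      omega

variable [DecidableEq I] [DecidableRel Q.Adj] [DecidablePred K]

instance : DecidableRel (blowUp Q s K).Adj := fun _ _ => decidable_of_iff' _ blowUp_adj

lemma card_filter_blowUp_adj_fiber (i : I) (a : Fin (s i)) (j : I) :
    #{b : Fin (s j) | (blowUp Q s K).Adj ⟨i, a⟩ ⟨j, b⟩} =
      (if Q.Adj i j then s j else 0) + if i = j ∧ K i then s i - 1 else 0 := by
  by_cases hQ : Q.Adj i j
  · simp [blowUp_adj, hQ, hQ.ne]
  by_cases hij : i = j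
  · subst hij
    by_cases hK : K i
    · simp [blowUp_adj, hK, sigma_mk_injective.ne_iff, filter_ne]
    · simp [blowUp_adj, hK]
  · simp [blowUp_adj, hQ, hij]

variable [Fintype I]

lemma degree_blowUp (i : I) (a : Fin (s i)) :
    (blowUp Q s K).degree ⟨i, a⟩ =
      ∑ j, (if Q.Adj i j then s j else 0) + if K i then s i - 1 else 0 := by
  rw [← card_neighborFinset_eq_degree, neighborFinset_eq_filter, card_filter, Fintype.sum_sigma]
  simp_rw [← card_filter, card_filter_blowUp_adj_fiber, sum_add_distrib]
  simp [ite_and]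

lemma two_mul_ncard_edgeSet_blowUp :
    2 * (blowUp Q s K).edgeSet.ncard =
      ∑ i, ∑ j, (if Q.Adj i j then s i * s j else 0) +
        ∑ i, if K i then s i * (s i - 1) else 0 := by
  rw [← coe_edgeFinset, Set.ncard_coe_finset, ← sum_degrees_eq_twice_card_edges,
    Fintype.sum_sigma]
  simp only [degree_blowUp, Finset.sum_const, card_univ, Fintype.card_fin, smul_eq_mul, mul_add,
    mul_sum, sum_add_distrib, mul_ite, mul_zero]

end BlowUp

section Gadget

variable {k : ℕ}

/-- The hub `inr t` is joined to the vertices `inl i` with `i < r t`; the hubs `inr 0` and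
`inr 2` are joined iff `ch`. -/
def gadget (H : SimpleGraph (Fin k)) (r : Fin 3 → ℕ) (ch : Bool) :
    SimpleGraph (Fin k ⊕ Fin 3) where
  Adj
    | .inl i, .inl j => H.Adj i j
    | .inl i, .inr t | .inr t, .inl i => i < r t
    | .inr t, .inr u => ch ∧ t ≠ u ∧ t ≠ 1 ∧ u ≠ 1
  symm := ⟨by
    rintro (i | t) (j | u) h
    · exact h.symm
    all_goals simp_all [ne_comm]⟩
  loopless := ⟨by rintro (i | t) h <;> simp_all⟩

variable {H : SimpleGraph (Fin k)} {r : Fin 3 → ℕ} {ch : Bool}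

@[simp] lemma gadget_adj_inl_inl {i j : Fin k} :
    (gadget H r ch).Adj (.inl i) (.inl j) ↔ H.Adj i j := Iff.rfl

@[simp] lemma gadget_adj_inl_inr {i : Fin k} {t : Fin 3} :
    (gadget H r ch).Adj (.inl i) (.inr t) ↔ i < r t := Iff.rfl

@[simp] lemma gadget_adj_inr_inl {i : Fin k} {t : Fin 3} :
    (gadget H r ch).Adj (.inr t) (.inl i) ↔ i < r t := Iff.rfl

@[simp] lemma gadget_adj_inr_inr {t u : Fin 3} :
    (gadget H r ch).Adj (.inr t) (.inr u) ↔ ch ∧ t ≠ u ∧ t ≠ 1 ∧ u ≠ 1 := Iff.rfl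

instance [DecidableRel H.Adj] : DecidableRel (gadget H r ch).Adj
  | .inl _, .inl _ => decidable_of_iff' _ gadget_adj_inl_inl
  | .inl _, .inr _ => decidable_of_iff' _ gadget_adj_inl_inr
  | .inr _, .inl _ => decidable_of_iff' _ gadget_adj_inr_inl
  | .inr _, .inr _ => decidable_of_iff' _ gadget_adj_inr_inr

lemma gadget_connected (hH : H.Connected) (h₀ : 0 < r 0) (h₁ : 0 < r 1) (h₂ : ch ∨ 0 < r 2) :
    (gadget H r ch).Connected := by
  have hk : 0 < k := Fin.pos_iff_nonempty.mpr hH.nonempty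
  let v₀ : Fin k ⊕ Fin 3 := .inl ⟨0, hk⟩
  have hinr : ∀ t : Fin 3, 0 < r t → (gadget H r ch).Reachable (.inr t) v₀ := fun t ht =>
    Adj.reachable (by simpa [v₀] using ht)
  have hv₀ : ∀ v, (gadget H r ch).Reachable v v₀ := by
    rintro (i | t)
    · exact (hH.preconnected i ⟨0, hk⟩).map ⟨Sum.inl, id⟩
    fin_cases t
    · exact hinr 0 h₀
    · exact hinr 1 h₁
    · rcases h₂ with hch | h₂
      · exact (Adj.reachable (by simp [hch] : (gadget H r ch).Adj (.inr 2) (.inr 0))).trans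
          (hinr 0 h₀)
      · exact hinr 2 h₂
  exact ⟨fun u v => (hv₀ u).trans (hv₀ v).symm⟩

lemma sum_sum_ite_adj [DecidableRel H.Adj] (c : ℕ) :
    ∑ i, ∑ j, (if H.Adj i j then c else 0) = 2 * H.edgeSet.ncard * c := by
  simp only [sum_ite, sum_const_zero, add_zero, Finset.sum_const, smul_eq_mul,
    ← neighborFinset_eq_filter, card_neighborFinset_eq_degree, ← sum_mul,
    sum_degrees_eq_twice_card_edges, ← coe_edgeFinset, Set.ncard_coe_finset]

lemma sum_ite_val_lt {m : ℕ} (hm : m ≤ k) (c : ℕ) :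
    ∑ i : Fin k, (if (i : ℕ) < m then c else 0) = m * c := by
  rw [sum_ite, sum_const_zero, add_zero, Finset.sum_const, Fin.card_filter_val_lt,
    min_eq_right hm, smul_eq_mul]

lemma two_mul_ncard_edgeSet_blowUp_gadget [DecidableRel H.Adj] (hr : ∀ t, r t ≤ k) (s₂ : ℕ)
    (κ : Bool) :
    2 * (blowUp (gadget H r ch) (Sum.elim (fun _ => 2) ![3, s₂, 2])
        (fun v => v = .inr 0 ∧ κ)).edgeSet.ncard =
      8 * H.edgeSet.ncard + 4 * (3 * r 0 + s₂ * r 1 + 2 * r 2) + 12 * ch.toNat + 6 * κ.toNat := by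
  rw [two_mul_ncard_edgeSet_blowUp]
  simp only [Fintype.sum_sum_type, Fin.sum_univ_three, Sum.elim_inl, Sum.elim_inr,
    gadget_adj_inl_inl, gadget_adj_inl_inr, gadget_adj_inr_inl, gadget_adj_inr_inr,
    sum_add_distrib, sum_sum_ite_adj, sum_ite_val_lt (hr _)]
  cases ch <;> cases κ <;> simp <;> ring

theorem exists_isAnosov_of_gadget_parameters {k s₂ e d₀ d₁ : ℕ} (ch κ : Bool) (hs₂ : 2 ≤ s₂)
    (he : k ≤ e + 1) (he' : e ≤ k.choose 2) (hd₀ : 0 < d₀) (hd₀' : d₀ ≤ k) (hd₁ : 0 < d₁)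
    (hd₁' : d₁ ≤ k) :
    ∃ G : SimpleGraph (Fin (2 * k + 5 + s₂)), IsAnosov G ∧
      G.edgeSet.ncard = 4 * e + 6 * d₀ + 2 * s₂ * d₁ + 4 + 2 * ch.toNat + 3 * κ.toNat := by
  classical
  obtain ⟨H, hH, rfl⟩ := exists_connected_ncard_edgeSet (by omega) he he'
  let r : Fin 3 → ℕ := ![d₀, d₁, if ch then 0 else 1]
  let s : Fin k ⊕ Fin 3 → ℕ := Sum.elim (fun _ => 2) ![3, s₂, 2]
  let B := blowUp (gadget H r ch) s (fun v => v = .inr 0 ∧ κ)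
  have hcard : Fintype.card (Σ v, Fin (s v)) = 2 * k + 5 + s₂ := by
    simp [s, Fintype.sum_sum_type, Fin.sum_univ_three]
    ring
  have : Nontrivial (Fin k ⊕ Fin 3) := ⟨.inr 0, .inr 1, by simp⟩
  have hB : IsAnosov B := by
    refine isAnosov_blowUp (gadget_connected hH hd₀ hd₁ ?_) ?_ ?_
    · cases ch <;> simp [r]
    · rintro (i | t)
      · simp [s]
      · fin_cases t <;> simp [s, hs₂]
    · rintro v ⟨rfl, -⟩
      simp [s]
  have hE : 2 * B.edgeSet.ncard = _ := two_mul_ncard_edgeSet_blowUp_gadget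
    (fun t => by fin_cases t <;> cases ch <;> simp [r] <;> omega) s₂ κ
  refine ⟨B.overFin hcard, hB.of_iso (B.overFinIso hcard), ?_⟩
  rw [← (B.overFinIso hcard).ncard_edgeSet_eq, mul_assoc 2 s₂]
  cases ch <;> simp [r] at hE ⊢ <;> omega

end Gadget

lemma two_mul_choose_two_add (k : ℕ) : 2 * k.choose 2 + k = k * k := by
  have h := Nat.div_two_mul_two_of_even (Nat.even_mul_pred_self k)
  rw [← Nat.choose_two_right, Nat.mul_sub_one] at h
  have := Nat.le_mul_self k
  omega

lemma exists_eq_four_mul_add_bool {r : ℕ} (hr : r ≠ 1) :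
    ∃ (R : ℕ) (ch κ : Bool), r = 4 * R + 2 * ch.toNat + 3 * κ.toNat := by
  obtain h | h | h | h : r % 4 = 0 ∨ r % 4 = 1 ∨ r % 4 = 2 ∨ r % 4 = 3 := by omega
  · exact ⟨r / 4, false, false, by simp; omega⟩
  · exact ⟨(r - 5) / 4, true, true, by simp; omega⟩
  · exact ⟨r / 4, true, false, by simp; omega⟩
  · exact ⟨r / 4, false, true, by simp; omega⟩

lemma exists_gadget_parameters {k s₂ m : ℕ} (hk : 3 ≤ k) (hs₂ : s₂ = 2 ∨ s₂ = 3)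
    (hlo : 2 * (2 * k + 5 + s₂) ≤ m + 2)
    (hhi : 2 * m + 10 * (2 * k + 5 + s₂) ≤ (2 * k + 5 + s₂) ^ 2 + 15) :
    ∃ (e d₀ d₁ : ℕ) (ch κ : Bool), k ≤ e + 1 ∧ e ≤ k.choose 2 ∧ 0 < d₀ ∧ d₀ ≤ k ∧ 0 < d₁ ∧
      d₁ ≤ k ∧ m = 4 * e + 6 * d₀ + 2 * s₂ * d₁ + 4 + 2 * ch.toNat + 3 * κ.toNat := by
  have hc := two_mul_choose_two_add k
  have hkk : 3 * k ≤ k * k := Nat.mul_le_mul_right k hk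
  have hsq : (2 * k + 5 + s₂) ^ 2 = 4 * (k * k) + 4 * k * (5 + s₂) + (5 + s₂) ^ 2 := by ring
  -- `δ ≥ 2` is the excess of `m` over its least possible value: fill it greedily with the hubs
  -- `inr 0` and `inr 1`, then the remainder, which is never `1`, with `H`, `ch` and `κ`
  set δ := m + 4 - 2 * (2 * k + 5 + s₂)
  set a := min (k - 1) ((δ - 2) / 6)
  set b := min (k - 1) ((δ - 6 * a - 2) / (2 * s₂))
  obtain ⟨R, ch, κ, hR⟩ := exists_eq_four_mul_add_bool (r := δ - 6 * a - 2 * s₂ * b)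
    (by rcases hs₂ with rfl | rfl <;> omega)
  refine ⟨k - 1 + R, a + 1, b + 1, ch, κ, ?_⟩
  rcases hs₂ with rfl | rfl <;> omega

theorem exists_isAnosov_ncard_edgeSet {n m : ℕ} (hn : 13 ≤ n) (hlo : 2 * n ≤ m + 2)
    (hhi : 2 * m + 10 * n ≤ n ^ 2 + 15) :
    ∃ G : SimpleGraph (Fin n), IsAnosov G ∧ G.edgeSet.ncard = m := by
  obtain ⟨k, s₂, hk, hs₂, rfl⟩ : ∃ k s₂, 3 ≤ k ∧ (s₂ = 2 ∨ s₂ = 3) ∧ n = 2 * k + 5 + s₂ := by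
    rcases Nat.even_or_odd n with ⟨j, hj⟩ | ⟨j, hj⟩
    · exact ⟨j - 4, 3, by omega, by omega, by omega⟩
    · exact ⟨j - 3, 2, by omega, by omega, by omega⟩
  obtain ⟨e, d₀, d₁, ch, κ, he, he', hd₀, hd₀', hd₁, hd₁', rfl⟩ :=
    exists_gadget_parameters hk hs₂ hlo hhi
  exact exists_isAnosov_of_gadget_parameters ch κ (by omega) he he' hd₀ hd₀' hd₁ hd₁'

lemma exists_isAnosov_of_mem_Icc {w n : ℕ} (hn : n ∈ Icc (Nat.sqrt (2 * w) + 5) ((w + 2) / 3)) :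
    ∃ G : SimpleGraph (Fin n), IsAnosov G ∧ n + G.edgeSet.ncard = w := by
  obtain ⟨hsqrt, hw⟩ := mem_Icc.mp hn
  obtain ⟨j, rfl⟩ : ∃ j, n = j + 4 := ⟨n - 4, by omega⟩
  have hj : 2 * w < j ^ 2 := Nat.sqrt_lt'.mp (by omega)
  have hsq : (j + 4) ^ 2 = j ^ 2 + 8 * j + 16 := by ring
  have h13 : 13 ≤ j + 4 := by
    by_contra! h
    have : j < 9 := by omega
    interval_cases j <;> omega
  obtain ⟨G, hG, hm⟩ := exists_isAnosov_ncard_edgeSet (m := w - (j + 4)) h13 (by omega) (by omega)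
  exact ⟨G, hG, by omega⟩

instance (w : ℕ) :
    Finite {p : Σ n : ℕ, SimpleGraph (Fin n) // IsAnosov p.2 ∧ p.1 + p.2.edgeSet.ncard = w} :=
  Set.Finite.to_subtype <|
    ((Set.finite_Iic w).biUnion fun n _ => Set.finite_range (Sigma.mk n)).subset fun p hp =>
      Set.mem_biUnion (x := p.1) (Set.mem_Iic.mpr (by have := hp.2; omega)) ⟨p.2, rfl⟩

lemma card_le_nuCount (w : ℕ) (S : Finset ℕ)
    (hS : ∀ n ∈ S, ∃ G : SimpleGraph (Fin n), IsAnosov G ∧ n + G.edgeSet.ncard = w) :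
    #S ≤ nuCount w := by
  choose G hG using hS
  let f : S → Quotient (nuSetoid w) := fun n => ⟦⟨⟨n, G n n.2⟩, hG n n.2⟩⟧
  have hf : Function.Injective f := by
    intro n n' h
    obtain ⟨e⟩ := Quotient.exact h
    have := Fintype.card_congr e.toEquiv
    simp only [Fintype.card_fin] at this
    exact Subtype.ext this
  simpa [nuCount] using Nat.card_le_card_of_injective f hf

/-- `ν(n+m) > (n+m)/3 − √(2(n+m)) − 9/2`. -/
theorem nuCount_lower_bound (w : ℕ) :
    (w : ℝ) / 3 - Real.sqrt (2 * w) - 9 / 2 < (nuCount w : ℝ) := by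
  set q := (w + 2) / 3
  set s := Nat.sqrt (2 * w)
  have hcount : q + 1 ≤ nuCount w + (s + 5) := by
    have := card_le_nuCount w _ fun n hn => exists_isAnosov_of_mem_Icc hn
    rw [Nat.card_Icc] at this
    omega
  have hq : (w : ℝ) ≤ 3 * q := by exact_mod_cast (by omega : w ≤ 3 * q)
  have hs : (s : ℝ) ≤ Real.sqrt (2 * w) := by exact_mod_cast Real.nat_sqrt_le_real_sqrt
  have hcount' : (q : ℝ) + 1 ≤ nuCount w + (s + 5) := by exact_mod_cast hcount
  linarith
end

section
/- For t ∈ ℕ, to each binary string α = (α₁,…,α_t) ∈ {0,1}^t associate the t×t matrix A(α) with entries A(α)_{ij} = α_j if j > i, A(α)_{ij} = α_i if i > j, and A(α)_{ii} = 1 − α_i. Then for every α, the matrix A(α) is symmetric and has pairwise distinct rows, and the map α ↦ A(α) is injective. -/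
/-- The matrix associated to a binary string `α ∈ {0,1}^t`: entry `(i,j)` is `α j` if `j > i`,
`α i` if `i > j`, and the opposite bit `1 - α i` on the diagonal. -/
def stringMatrix (t : ℕ) (α : Fin t → Fin 2) : Matrix (Fin t) (Fin t) (Fin 2) :=
  Matrix.of fun i j => if i < j then α j else if j < i then α i else 1 - α i

lemma one_sub_ne : ∀ x : Fin 2, 1 - x ≠ x := by decide

lemma one_sub_inj : Function.Injective (fun x : Fin 2 => 1 - x) := by decide

/-- For every binary string `α` of length `t`, the matrix `A(α)` is symmetric with pairwise
distinct rows, and the map `α ↦ A(α)` is injective. -/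
theorem stringMatrix_symm_distinct_injective (t : ℕ) :
    (∀ α : Fin t → Fin 2, (stringMatrix t α).IsSymm ∧
      ∀ i j : Fin t, i ≠ j → ∃ n, stringMatrix t α i n ≠ stringMatrix t α j n) ∧
    Function.Injective (stringMatrix t) := by
  constructor
  · intro α
    constructor
    · ext i j
      simp only [stringMatrix, Matrix.transpose_apply, Matrix.of_apply]
      rcases lt_trichotomy i j with h | h | h
      · simp [h, asymm h]
      · subst h; simp
      · simp [h, asymm h]
    · intro i j hij
      rcases lt_trichotomy i j with h | h | h
      · refine ⟨j, ?_⟩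
        simp only [stringMatrix, Matrix.of_apply, if_pos h, lt_irrefl, if_neg (lt_irrefl j)]
        exact fun e => one_sub_ne (α j) e.symm
      · exact absurd h hij
      · refine ⟨i, ?_⟩
        simp only [stringMatrix, Matrix.of_apply, if_pos h, lt_irrefl, if_neg (lt_irrefl i)]
        exact one_sub_ne (α i)
  · intro α β h
    funext i
    have := congrFun (congrFun h i) i
    simp only [stringMatrix, Matrix.of_apply, lt_irrefl, if_neg (lt_irrefl i)] at this
    exact one_sub_inj this
end

section
/- For every t ∈ ℕ, 2^t ≤ X(t) · t!, where X(t) is the number of equivalence classes of t×t symmetric 0–1 matrices with pairwise distinct rows under simultaneous permutation of rows and columns. -/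
/-- `t × t` symmetric 0–1 matrices with pairwise distinct rows. -/
def SymDistinctMat (t : ℕ) : Type :=
  {A : Matrix (Fin t) (Fin t) (Fin 2) // A.IsSymm ∧ ∀ i j : Fin t, i ≠ j → ∃ n, A i n ≠ A j n}

/-- Simultaneous permutation of rows and columns. -/
def matPermSetoid (t : ℕ) : Setoid (SymDistinctMat t) where
  r A B := ∃ σ : Equiv.Perm (Fin t), ∀ i j, B.1 i j = A.1 (σ i) (σ j)
  iseqv := by
    refine ⟨fun A => ⟨Equiv.refl _, fun i j => rfl⟩, ?_, ?_⟩
    · rintro A B ⟨σ, h⟩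
      exact ⟨σ.symm, fun i j => by rw [h]; simp⟩
    · rintro A B C ⟨σ, h⟩ ⟨τ, h'⟩
      exact ⟨τ.trans σ, fun i j => by rw [h', h]; rfl⟩

/-- `X t`: the number of `t × t` symmetric 0–1 matrices with pairwise distinct rows, up to
simultaneous permutation of rows and columns. -/
noncomputable def symDistinctCount (t : ℕ) : ℕ := Nat.card (Quotient (matPermSetoid t))

/-!
Permuting rows and columns moves a matrix to at most `t!` matrices, so the number of
symmetric 0–1 matrices with distinct rows is at most `X(t) · t!`. For `t ≥ 4` the path graph on
`t` vertices is twin-free: any two vertices are told apart by the adjacency to a third one. Hence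
its adjacency matrix plus an arbitrary 0–1 diagonal has distinct rows, which gives `2^t` such
matrices. For `t ≤ 3` it suffices that `I` and `J - I` are inequivalent, i.e. `X(t) ≥ 2`.
-/

open SimpleGraph Matrix

theorem Setoid.card_le_card_quotient_mul_card {α G : Type*} [Finite α] [Finite G]
    (s : Setoid α) (act : G → α → α) (hact : ∀ a b, s a b → ∃ g, b = act g a) :
    Nat.card α ≤ Nat.card (Quotient s) * Nat.card G := by
  choose g hg using fun b => hact _ b (Quotient.mk_out (s := s) b)
  have hinj : Function.Injective fun b => (Quotient.mk s b, g b) := by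
    intro a b hab
    simp only [Prod.mk.injEq] at hab
    rw [hg a, hg b, hab.1, hab.2]
  simpa only [Nat.card_prod] using Nat.card_le_card_of_injective _ hinj

def SimpleGraph.IsTwinFree {V : Type*} (G : SimpleGraph V) : Prop :=
  ∀ ⦃i j⦄, i ≠ j → ∃ k, k ≠ i ∧ k ≠ j ∧ ¬(G.Adj i k ↔ G.Adj j k)

theorem SimpleGraph.pathGraph_isTwinFree {t : ℕ} (ht : 4 ≤ t) : (pathGraph t).IsTwinFree := by
  intro i j hij
  wlog hlt : i < j generalizing i j
  · obtain ⟨k, hkj, hki, hk⟩ := this hij.symm (lt_of_le_of_ne (not_lt.1 hlt) hij.symm)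
    exact ⟨k, hki, hkj, fun h => hk h.symm⟩
  rw [Fin.lt_def] at hlt
  -- `1` is not adjacent to `j = t - 1` because `t ≥ 4`
  refine ⟨⟨if 0 < i.val then i - 1 else if j.val + 1 < t then j + 1 else 1,
    by split_ifs <;> omega⟩, ?_⟩
  simp only [ne_eq, Fin.ext_iff, pathGraph_adj]
  split_ifs <;> omega

theorem SimpleGraph.adjMatrix_add_diagonal_row_ne {V : Type*} [DecidableEq V]
    {G : SimpleGraph V} [DecidableRel G.Adj] (hG : G.IsTwinFree) (v : V → Fin 2) {i j : V}
    (hij : i ≠ j) :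
    ∃ n, (G.adjMatrix (Fin 2) + diagonal v) i n ≠ (G.adjMatrix (Fin 2) + diagonal v) j n := by
  obtain ⟨k, hki, hkj, hk⟩ := hG hij
  refine ⟨k, ?_⟩
  simp only [Matrix.add_apply, adjMatrix_apply, diagonal_apply_ne _ hki.symm,
    diagonal_apply_ne _ hkj.symm, add_zero]
  split_ifs <;> simp_all

namespace SymDistinctMat

variable {t : ℕ}

instance : Finite (SymDistinctMat t) := by
  unfold SymDistinctMat; infer_instance

def permute (σ : Equiv.Perm (Fin t)) (A : SymDistinctMat t) : SymDistinctMat t :=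
  ⟨A.1.submatrix σ σ, A.2.1.submatrix σ, fun i j hij => by
    obtain ⟨n, hn⟩ := A.2.2 (σ i) (σ j) (σ.injective.ne hij)
    exact ⟨σ.symm n, by simpa using hn⟩⟩

def ofGraph {G : SimpleGraph (Fin t)} [DecidableRel G.Adj] (hG : G.IsTwinFree)
    (v : Fin t → Fin 2) : SymDistinctMat t :=
  ⟨G.adjMatrix (Fin 2) + diagonal v, G.isSymm_adjMatrix.add (isSymm_diagonal v),
    fun _ _ => adjMatrix_add_diagonal_row_ne hG v⟩

theorem ofGraph_injective {G : SimpleGraph (Fin t)} [DecidableRel G.Adj] (hG : G.IsTwinFree) :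
    Function.Injective (ofGraph hG) := by
  intro v w h
  funext i
  simpa [ofGraph] using congrArg (fun A : SymDistinctMat t => A.1 i i) h

def one : SymDistinctMat t :=
  ⟨1, isSymm_one, fun i j hij => ⟨i, by simp [one_apply, Ne.symm hij]⟩⟩

def complete : SymDistinctMat t :=
  ⟨(⊤ : SimpleGraph (Fin t)).adjMatrix (Fin 2), isSymm_adjMatrix _,
    fun i j hij => ⟨i, by simp [Ne.symm hij]⟩⟩

end SymDistinctMat

open SymDistinctMat

theorem card_symDistinctMat_le (t : ℕ) :
    Nat.card (SymDistinctMat t) ≤ symDistinctCount t * t.factorial := by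
  have := Setoid.card_le_card_quotient_mul_card (matPermSetoid t) permute
    fun _ _ ⟨σ, h⟩ => ⟨σ, Subtype.ext (funext₂ h)⟩
  rwa [Nat.card_perm, Nat.card_fin] at this

theorem two_pow_le_card_symDistinctMat {t : ℕ} (ht : 4 ≤ t) :
    2 ^ t ≤ Nat.card (SymDistinctMat t) := by
  classical
  simpa using Nat.card_le_card_of_injective _ (ofGraph_injective (pathGraph_isTwinFree ht))

theorem symDistinctCount_pos (t : ℕ) : 0 < symDistinctCount t :=
  have : Nonempty (Quotient (matPermSetoid t)) := ⟨Quotient.mk _ one⟩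
  Nat.card_pos

theorem one_lt_symDistinctCount {t : ℕ} (ht : 0 < t) : 1 < symDistinctCount t := by
  have hne : Quotient.mk (matPermSetoid t) one ≠ Quotient.mk _ complete := by
    intro h
    obtain ⟨σ, hσ⟩ := Quotient.exact h
    simpa [SymDistinctMat.one, SymDistinctMat.complete] using hσ ⟨0, ht⟩ ⟨0, ht⟩
  exact Finite.one_lt_card_iff_nontrivial.mpr ⟨_, _, hne⟩

/-- `2^t ≤ X(t) · t!`. -/
theorem two_pow_le_symDistinctCount_mul_factorial (t : ℕ) :
    2 ^ t ≤ symDistinctCount t * Nat.factorial t := by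
  rcases le_or_gt 4 t with ht | ht
  · exact (two_pow_le_card_symDistinctMat ht).trans (card_symDistinctMat_le t)
  · rcases Nat.eq_zero_or_pos t with rfl | hpos
    · simpa [Nat.one_le_iff_ne_zero] using (symDistinctCount_pos 0).ne'
    · have := one_lt_symDistinctCount hpos
      interval_cases t <;> simp [Nat.factorial] <;> omega
end

section
/- For every natural number n, ∑_{λ ∈ Λ₃(n)} X(ℓ(λ)) ≤ J(n), where the sum is over all partitions λ of n all of whose parts are at least 3, J(n) is the number of isomorphism classes of (not necessarily connected) simple graphs on n vertices in which every ∼-class has at least 3 vertices, and X(t) is the number of equivalence classes of t×t symmetric 0–1 matrices with pairwise distinct rows under simultaneous permutation of rows and columns. -/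
/-- Graphs on `Fin n` satisfying a property `P`, up to isomorphism. -/
def graphClassSetoid (n : ℕ) (P : SimpleGraph (Fin n) → Prop) :
    Setoid {G : SimpleGraph (Fin n) // P G} where
  r G H := Nonempty (G.1 ≃g H.1)
  iseqv := ⟨fun _ => ⟨RelIso.refl _⟩, fun ⟨e⟩ => ⟨e.symm⟩, fun ⟨e⟩ ⟨f⟩ => ⟨e.trans f⟩⟩

/-- `J n`: the number of isomorphism classes of (not necessarily connected) graphs on `n`
vertices all of whose ∼-classes have at least three vertices. -/
noncomputable def JCount (n : ℕ) : ℕ :=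
  Nat.card (Quotient (graphClassSetoid n (fun G => ∀ x, 3 ≤ {y | simRel G x y}.ncard)))

/-!
Given `λ ∈ Λ₃(n)` with `t` parts and a `t × t` symmetric 0–1 matrix `A` with distinct rows, split
the `n` vertices into blocks of sizes `λ` and blow `A` up along them: distinct vertices in blocks
`i`, `j` are adjacent iff `A i j = 1`. Two vertices of one block have the same open or the same
closed neighbourhood, according to `A i i`. If `x`, `y` lie in different blocks, their rows of `A`
differ in some column `k`, and a vertex of block `k` other than `x` and `y` (blocks have at least
three vertices) is adjacent to exactly one of them. So the `∼`-classes are exactly the blocks: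
each has at least three vertices, and an isomorphism between two blowups permutes the blocks,
preserving their sizes (hence `λ`) and conjugating the matrices. Thus `(λ, [A]) ↦ [blowup]` is
injective into the classes counted by `J(n)`.
-/

theorem Set.exists_mem_ne_ne_of_three_le_ncard {α : Type*} {s : Set α} (hs : 3 ≤ s.ncard)
    (x y : α) : ∃ z ∈ s, z ≠ x ∧ z ≠ y := by
  have hxy : ({x, y} : Set α).ncard ≤ 2 :=
    (Set.ncard_insert_le x {y}).trans (by rw [Set.ncard_singleton])
  have hdiff : (s \ {x, y}).Nonempty :=
    Set.nonempty_of_ncard_ne_zero (by have := Set.le_ncard_sdiff {x, y} s; omega)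
  obtain ⟨z, hzs, hzxy⟩ := hdiff
  simp only [Set.mem_insert_iff, Set.mem_singleton_iff, not_or] at hzxy
  exact ⟨z, hzs, hzxy⟩

theorem Function.Surjective.exists_equiv_comp_eq {α β γ : Type*} {f : α → β} {g : α → γ}
    (hf : f.Surjective) (hg : g.Surjective) (h : ∀ x y, f x = f y ↔ g x = g y) :
    ∃ σ : β ≃ γ, ∀ x, σ (f x) = g x := by
  refine ⟨(Setoid.quotientKerEquivOfSurjective f hf).symm.trans
    ((Quotient.congrRight h).trans (Setoid.quotientKerEquivOfSurjective g hg)), fun x => ?_⟩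
  have hx : (Setoid.quotientKerEquivOfSurjective f hf).symm (f x) = ⟦x⟧ :=
    (Equiv.symm_apply_eq _).mpr rfl
  rw [Equiv.trans_apply, Equiv.trans_apply, hx]
  rfl

theorem Multiset.exists_map_univ_eq {α : Type*} (s : Multiset α) :
    ∃ f : Fin s.card → α, Finset.univ.val.map f = s := by
  refine ⟨s.toList.get ∘ finCongr (Multiset.length_toList s).symm, ?_⟩
  rw [← Multiset.map_map, Multiset.map_univ_val_equiv, Fin.univ_val_map,
    List.ofFn_get, Multiset.coe_toList]

theorem exists_ncard_preimage_eq {ι : Type*} [Fintype ι] {n : ℕ} (f : ι → ℕ)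
    (hn : ∑ i, f i = n) : ∃ c : Fin n → ι, ∀ i, (c ⁻¹' {i}).ncard = f i := by
  let e : Fin n ≃ Σ i, Fin (f i) := Fintype.equivOfCardEq (by simp [hn])
  refine ⟨fun x => (e x).1, fun i => ?_⟩
  rw [← Nat.card_coe_set_eq, ← Nat.card_fin (f i)]
  exact Nat.card_congr ((e.subtypeEquiv fun _ => Iff.rfl).trans (Equiv.sigmaSubtype i))

section SimRel

variable {V W : Type*} {G : SimpleGraph V} {G' : SimpleGraph W} {x y z : V}

theorem simRel_comm : simRel G x y ↔ simRel G y x :=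
  ⟨Or.imp Eq.symm Eq.symm, Or.imp Eq.symm Eq.symm⟩

theorem not_simRel_of_adj_of_not_adj (hxz : G.Adj x z) (hyz : ¬G.Adj y z) (hzy : z ≠ y) :
    ¬simRel G x y := by
  rintro (h | h)
  · exact hyz (h ▸ hxz : z ∈ G.neighborSet y)
  · have hz : z ∈ insert y (G.neighborSet y) := h ▸ Set.mem_insert_of_mem x hxz
    exact hz.elim hzy hyz

theorem SimpleGraph.Iso.simRel_iff (φ : G ≃g G') : simRel G' (φ x) (φ y) ↔ simRel G x y := by
  have hpre : ∀ {s t : Set W}, s = t ↔ φ ⁻¹' s = φ ⁻¹' t :=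
    (Set.preimage_injective.mpr φ.surjective).eq_iff.symm
  have hnbr : ∀ v, φ ⁻¹' G'.neighborSet (φ v) = G.neighborSet v :=
    fun v => Set.ext fun _ => φ.map_adj_iff
  have hins : ∀ v, φ ⁻¹' insert (φ v) (G'.neighborSet (φ v)) = insert v (G.neighborSet v) :=
    fun v => by ext w; simp [← hnbr v]
  unfold simRel
  rw [hpre, hpre (s := insert _ _), hins, hins, hnbr, hnbr]

end SimRel

def blowup {ι V : Type*} (A : Matrix ι ι (Fin 2)) (hA : A.IsSymm) (c : V → ι) :
    SimpleGraph V where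
  Adj x y := x ≠ y ∧ A (c x) (c y) = 1
  symm := ⟨fun x y h => ⟨h.1.symm, hA.apply (c y) (c x) ▸ h.2⟩⟩
  loopless := ⟨fun _ h => h.1 rfl⟩

section Blowup

variable {ι V : Type*} {A : Matrix ι ι (Fin 2)} {hA : A.IsSymm} {c : V → ι} {x y : V}

@[simp]
theorem blowup_adj : (blowup A hA c).Adj x y ↔ x ≠ y ∧ A (c x) (c y) = 1 := Iff.rfl

theorem neighborSet_blowup (hx : A (c x) (c x) ≠ 1) :
    (blowup A hA c).neighborSet x = {z | A (c x) (c z) = 1} :=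
  Set.ext fun z => ⟨And.right, fun hz => ⟨by rintro rfl; exact hx hz, hz⟩⟩

theorem insert_neighborSet_blowup (hx : A (c x) (c x) = 1) :
    insert x ((blowup A hA c).neighborSet x) = {z | A (c x) (c z) = 1} := by
  ext z
  by_cases hzx : z = x
  · subst hzx; simpa using hx
  · simp [hzx, Ne.symm hzx]

theorem simRel_blowup_of_eq (h : c x = c y) : simRel (blowup A hA c) x y := by
  by_cases hx : A (c x) (c x) = 1
  · right
    rw [insert_neighborSet_blowup hx, insert_neighborSet_blowup (h ▸ hx : A (c y) (c y) = 1), h]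
  · left
    rw [neighborSet_blowup hx, neighborSet_blowup (h ▸ hx : A (c y) (c y) ≠ 1), h]

theorem not_simRel_blowup (hc : ∀ i, 3 ≤ (c ⁻¹' {i}).ncard) {k : ι} (hx : A (c x) k = 1)
    (hy : A (c y) k ≠ 1) : ¬simRel (blowup A hA c) x y := by
  obtain ⟨z, hz, hzx, hzy⟩ := Set.exists_mem_ne_ne_of_three_le_ncard (hc k) x y
  rw [Set.mem_preimage, Set.mem_singleton_iff] at hz
  exact not_simRel_of_adj_of_not_adj ⟨hzx.symm, hz ▸ hx⟩ (fun h => hy (hz ▸ h.2)) hzy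

theorem simRel_blowup_iff (hA₁ : Function.Injective A) (hc : ∀ i, 3 ≤ (c ⁻¹' {i}).ncard) :
    simRel (blowup A hA c) x y ↔ c x = c y := by
  refine ⟨fun h => ?_, simRel_blowup_of_eq⟩
  by_contra hne
  obtain ⟨k, hk⟩ := Function.ne_iff.mp (hA₁.ne hne)
  have : (A (c x) k = 1 ∧ A (c y) k ≠ 1) ∨ (A (c y) k = 1 ∧ A (c x) k ≠ 1) := by omega
  rcases this with ⟨hx, hy⟩ | ⟨hy, hx⟩
  · exact not_simRel_blowup hc hx hy h
  · exact not_simRel_blowup hc hy hx (simRel_comm.mp h)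

theorem setOf_simRel_blowup (hA₁ : Function.Injective A) (hc : ∀ i, 3 ≤ (c ⁻¹' {i}).ncard) :
    {y | simRel (blowup A hA c) x y} = c ⁻¹' {c x} :=
  Set.ext fun _ => (simRel_blowup_iff hA₁ hc).trans eq_comm

end Blowup

section Iso

variable {ι ι' V W : Type*} {A : Matrix ι ι (Fin 2)} {A' : Matrix ι' ι' (Fin 2)} {hA : A.IsSymm}
  {hA' : A'.IsSymm} {c : V → ι} {c' : W → ι'}

theorem exists_equiv_of_blowup_iso (hA₁ : Function.Injective A) (hA₁' : Function.Injective A')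
    (hc : ∀ i, 3 ≤ (c ⁻¹' {i}).ncard) (hc' : ∀ i, 3 ≤ (c' ⁻¹' {i}).ncard)
    (φ : blowup A hA c ≃g blowup A' hA' c') : ∃ σ : ι ≃ ι', ∀ x, σ (c x) = c' (φ x) := by
  have hsurj : c.Surjective := fun i =>
    Set.nonempty_of_ncard_ne_zero (s := c ⁻¹' {i}) (by have := hc i; omega)
  have hsurj' : c'.Surjective := fun i =>
    Set.nonempty_of_ncard_ne_zero (s := c' ⁻¹' {i}) (by have := hc' i; omega)
  refine hsurj.exists_equiv_comp_eq (hsurj'.comp φ.surjective) fun x y => ?_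
  rw [← simRel_blowup_iff (hA := hA) hA₁ hc, ← φ.simRel_iff, simRel_blowup_iff hA₁' hc']

theorem ncard_preimage_eq_of_equiv (φ : V ≃ W) {σ : ι ≃ ι'} (hσ : ∀ x, σ (c x) = c' (φ x))
    (i : ι) : (c' ⁻¹' {σ i}).ncard = (c ⁻¹' {i}).ncard := by
  have himage : c' ⁻¹' {σ i} = φ '' (c ⁻¹' {i}) := by
    ext w
    obtain ⟨x, rfl⟩ := φ.surjective w
    simp [← hσ]
  rw [himage, Set.ncard_image_of_injective _ φ.injective]

theorem apply_eq_of_blowup_iso (hc : ∀ i, 1 < (c ⁻¹' {i}).ncard)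
    (φ : blowup A hA c ≃g blowup A' hA' c') {σ : ι ≃ ι'} (hσ : ∀ x, σ (c x) = c' (φ x))
    (i j : ι) : A' (σ i) (σ j) = A i j := by
  obtain ⟨u, hu⟩ := Set.nonempty_of_ncard_ne_zero (by have := hc i; omega : (c ⁻¹' {i}).ncard ≠ 0)
  obtain ⟨v, hv, hvu⟩ := Set.exists_ne_of_one_lt_ncard (hc j) u
  have hadj : (blowup A' hA' c').Adj (φ u) (φ v) ↔ (blowup A hA c).Adj u v := φ.map_adj_iff
  rw [Set.mem_preimage, Set.mem_singleton_iff] at hu hv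
  simp only [blowup_adj, ← hσ, hu, hv, ne_eq, φ.injective.eq_iff, hvu.symm, not_false_eq_true,
    true_and] at hadj
  omega

end Iso

namespace Nat.Partition

variable {n : ℕ}

theorem exists_map_ncard_preimage_eq (p : n.Partition) :
    ∃ c : Fin n → Fin p.parts.card,
      Finset.univ.val.map (fun i => (c ⁻¹' {i}).ncard) = p.parts := by
  obtain ⟨f, hf⟩ := p.parts.exists_map_univ_eq
  obtain ⟨c, hc⟩ :=
    exists_ncard_preimage_eq f (by rw [Finset.sum_eq_multiset_sum, hf, p.parts_sum])
  exact ⟨c, by simp only [hc, hf]⟩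

noncomputable def blockOf (p : n.Partition) : Fin n → Fin p.parts.card :=
  p.exists_map_ncard_preimage_eq.choose

theorem map_ncard_preimage_blockOf (p : n.Partition) :
    Finset.univ.val.map (fun i => (p.blockOf ⁻¹' {i}).ncard) = p.parts :=
  p.exists_map_ncard_preimage_eq.choose_spec

theorem three_le_ncard_preimage_blockOf {p : n.Partition} (hp : ∀ i ∈ p.parts, 3 ≤ i)
    (i : Fin p.parts.card) : 3 ≤ (p.blockOf ⁻¹' {i}).ncard := by
  have hmem :=
    Multiset.mem_map_of_mem (fun i => (p.blockOf ⁻¹' {i}).ncard) (Finset.mem_univ_val i)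
  rw [map_ncard_preimage_blockOf] at hmem
  exact hp _ hmem

end Nat.Partition

theorem SymDistinctMat.injective {t : ℕ} (A : SymDistinctMat t) : Function.Injective A.1 := by
  intro i j hij
  by_contra hne
  obtain ⟨k, hk⟩ := A.2.2 i j hne
  exact hk (congrFun hij k)

instance {t : ℕ} : Finite (SymDistinctMat t) := Subtype.finite

noncomputable def blowupClass {n : ℕ} (p : {p : n.Partition // ∀ i ∈ p.parts, 3 ≤ i})
    (A : SymDistinctMat p.1.parts.card) :
    Quotient (graphClassSetoid n fun G => ∀ x, 3 ≤ {y | simRel G x y}.ncard) :=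
  ⟦⟨blowup A.1 A.2.1 p.1.blockOf, fun x => by
    rw [setOf_simRel_blowup A.injective (Nat.Partition.three_le_ncard_preimage_blockOf p.2)]
    exact Nat.Partition.three_le_ncard_preimage_blockOf p.2 _⟩⟧

theorem blowupClass_out_injective {n : ℕ} :
    Function.Injective fun x : Σ p : {p : n.Partition // ∀ i ∈ p.parts, 3 ≤ i},
      Quotient (matPermSetoid p.1.parts.card) => blowupClass x.1 x.2.out := by
  rintro ⟨p, q⟩ ⟨p', q'⟩ h
  obtain ⟨φ⟩ : Nonempty (blowup q.out.1 q.out.2.1 p.1.blockOf ≃g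
      blowup q'.out.1 q'.out.2.1 p'.1.blockOf) := Quotient.exact h
  have hc := Nat.Partition.three_le_ncard_preimage_blockOf p.2
  obtain ⟨σ, hσ⟩ := exists_equiv_of_blowup_iso q.out.injective q'.out.injective hc
    (Nat.Partition.three_le_ncard_preimage_blockOf p'.2) φ
  have hparts : p.1.parts = p'.1.parts := calc
    p.1.parts = Finset.univ.val.map fun i => (p.1.blockOf ⁻¹' {i}).ncard :=
      p.1.map_ncard_preimage_blockOf.symm
    _ = Finset.univ.val.map ((fun i => (p'.1.blockOf ⁻¹' {i}).ncard) ∘ σ) :=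
      Multiset.map_congr rfl fun i _ => (ncard_preimage_eq_of_equiv φ.toEquiv hσ i).symm
    _ = p'.1.parts := by
      rw [← Multiset.map_map, Multiset.map_univ_val_equiv, p'.1.map_ncard_preimage_blockOf]
  obtain rfl : p = p' := Subtype.ext (Nat.Partition.ext hparts)
  have hc₂ : ∀ i, 1 < (p.1.blockOf ⁻¹' {i}).ncard := fun i => (hc i).trans_lt' (by norm_num)
  obtain rfl : q = q' := (Quotient.out_equiv_out (s := matPermSetoid _)).mp ⟨σ.symm, fun i j => by
    simpa using apply_eq_of_blowup_iso hc₂ φ hσ (σ.symm i) (σ.symm j)⟩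
  rfl

/-- `∑_{λ ∈ Λ₃(n)} X(ℓ(λ)) ≤ J(n)`. -/
theorem sum_symDistinctCount_le_JCount (n : ℕ) :
    ∑ p ∈ Finset.univ.filter (fun p : Nat.Partition n => ∀ i ∈ p.parts, 3 ≤ i),
        symDistinctCount p.parts.card ≤ JCount n := by
  classical
  calc _ = ∑ p : {p : n.Partition // ∀ i ∈ p.parts, 3 ≤ i}, symDistinctCount p.1.parts.card :=
        Finset.sum_subtype _ (by simp) _
    _ = Nat.card (Σ p : {p : n.Partition // ∀ i ∈ p.parts, 3 ≤ i},
          Quotient (matPermSetoid p.1.parts.card)) := Nat.card_sigma.symm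
    _ ≤ JCount n := Nat.card_le_card_of_injective _ blowupClass_out_injective
end
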